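/- There exist constants C₁ and C₂, depending only on d and C_f, such that for every 0 < ε < 1/2, every t > 0, and every x ∈ ℝ^d with ‖x‖∞ ≤ m_t + C₁ σ_t √(log ε⁻¹), the score satisfies ‖∇ log p_t(x)‖ ≤ (C₂/σ_t) √(log ε⁻¹). -/

import Mathlib

/-!
Write `p_t = c · ∫ p₀(y) K(·, y) dy` with the Gaussian kernel `K(x, y) = exp (-‖x - m y‖² / 2σ²)`.
Differentiating under the integral sign gives Tweedie's formula
`∂ᵢ log p_t(x) = ∫ p₀ K (m yᵢ - xᵢ) / (σ² ∫ p₀ K)`. As `C_f⁻¹ ≤ p₀ ≤ C_f` on the cube, numerator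
and denominator are within a factor `C_f` of the same integrals against the indicator of the
cube, and there the kernel factorises over the coordinates. Hence `|∂ᵢ log p_t(x)| ≤ C_f² M / σ²`,
where `M` is the mean of `|u|` under the density `∝ exp (-u² / 2σ²)` on the interval
`[xᵢ - m, xᵢ + m]`. This mean is at most `τ + 4σ`, `τ` the distance from `0` to the interval:
trivially on short intervals, and on long ones because the Gaussian mass beyond `τ + 3σ` is
negligible compared to the mass of the interval. On the given region `τ ≤ σ √(log ε⁻¹)`, and
`4 ≤ 5 √(log ε⁻¹)` as `ε < 1/2`.
-/

open MeasureTheory Real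
open Set

section GaussianInterval

open intervalIntegral

variable {σ : ℝ}

lemma integral_mul_exp_neg_sq_div (hσ : σ ≠ 0) (a b : ℝ) :
    ∫ u in a..b, u * exp (-u ^ 2 / (2 * σ ^ 2)) =
      σ ^ 2 * (exp (-a ^ 2 / (2 * σ ^ 2)) - exp (-b ^ 2 / (2 * σ ^ 2))) := by
  have hderiv (u : ℝ) : HasDerivAt (fun v => -σ ^ 2 * exp (-v ^ 2 / (2 * σ ^ 2)))
      (u * exp (-u ^ 2 / (2 * σ ^ 2))) u := by
    have h : HasDerivAt (fun v : ℝ => -v ^ 2 / (2 * σ ^ 2)) (-(2 * u) / (2 * σ ^ 2)) u := by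
      simpa using (hasDerivAt_pow 2 u).neg.div_const (2 * σ ^ 2)
    refine (h.exp.const_mul (-σ ^ 2)).congr_deriv ?_
    field_simp
  rw [integral_eq_sub_of_hasDerivAt (fun u _ => hderiv u)
    ((by fun_prop : Continuous _).intervalIntegrable _ _)]
  ring

lemma integral_max_sub_mul_exp_le (hσ : σ ≠ 0) {s : ℝ} (hs : 0 ≤ s) {A B : ℝ} (hAB : A ≤ B) :
    ∫ u in A..B, max (u - s) 0 * exp (-u ^ 2 / (2 * σ ^ 2)) ≤
      σ ^ 2 * exp (-s ^ 2 / (2 * σ ^ 2)) := by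
  set f := fun u : ℝ => max (u - s) 0 * exp (-u ^ 2 / (2 * σ ^ 2))
  have hf : Continuous f := by fun_prop
  have hf0 : ∀ u, 0 ≤ f u := fun u => by positivity
  have hbelow : ∫ u in min A s..s, f u = 0 := by
    rw [← integral_zero (a := min A s) (b := s)]
    refine integral_congr fun u hu => ?_
    rw [uIcc_of_le (min_le_right _ _)] at hu
    simp [f, hu.2]
  calc ∫ u in A..B, f u ≤ ∫ u in min A s..max B s, f u :=
        integral_mono_interval (min_le_left _ _) hAB (le_max_left _ _)
          (Filter.Eventually.of_forall hf0) (hf.intervalIntegrable _ _)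
    _ = ∫ u in s..max B s, f u := by
        rw [← integral_add_adjacent_intervals (hf.intervalIntegrable _ s)
          (hf.intervalIntegrable _ _), hbelow, zero_add]
    _ ≤ ∫ u in s..max B s, u * exp (-u ^ 2 / (2 * σ ^ 2)) := by
        refine integral_mono_on (le_max_right _ _) (hf.intervalIntegrable _ _)
          ((by fun_prop : Continuous _).intervalIntegrable _ _) fun u hu => ?_
        have : max (u - s) 0 ≤ u := max_le (by linarith) (hs.trans hu.1)
        exact mul_le_mul_of_nonneg_right this (exp_nonneg _)
    _ ≤ σ ^ 2 * exp (-s ^ 2 / (2 * σ ^ 2)) := by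
        rw [integral_mul_exp_neg_sq_div hσ]
        have := exp_pos (-max B s ^ 2 / (2 * σ ^ 2))
        nlinarith [sq_nonneg σ]

lemma integral_max_abs_sub_mul_exp_le (hσ : σ ≠ 0) {s : ℝ} (hs : 0 ≤ s) {A B : ℝ} (hAB : A ≤ B) :
    ∫ u in A..B, max (|u| - s) 0 * exp (-u ^ 2 / (2 * σ ^ 2)) ≤
      2 * σ ^ 2 * exp (-s ^ 2 / (2 * σ ^ 2)) := by
  have hsplit (u : ℝ) : max (|u| - s) 0 * exp (-u ^ 2 / (2 * σ ^ 2)) =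
      max (u - s) 0 * exp (-u ^ 2 / (2 * σ ^ 2)) +
        max (-u - s) 0 * exp (-(-u) ^ 2 / (2 * σ ^ 2)) := by
    rw [neg_sq, ← add_mul]
    congr 1
    rcases abs_cases u with ⟨hu, _⟩ | ⟨hu, _⟩ <;> rw [hu] <;>
      simp only [max_def] <;> split_ifs <;> linarith
  have hreflect : ∫ u in A..B, max (-u - s) 0 * exp (-(-u) ^ 2 / (2 * σ ^ 2)) ≤
      σ ^ 2 * exp (-s ^ 2 / (2 * σ ^ 2)) := by
    rw [integral_comp_neg (fun u => max (u - s) 0 * exp (-u ^ 2 / (2 * σ ^ 2)))]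
    exact integral_max_sub_mul_exp_le hσ hs (neg_le_neg hAB)
  simp_rw [hsplit]
  rw [integral_add ((by fun_prop : Continuous _).intervalIntegrable _ _)
    ((by fun_prop : Continuous _).intervalIntegrable _ _)]
  linarith [integral_max_sub_mul_exp_le hσ hs hAB]

lemma mul_exp_le_integral_exp (hσ : 0 < σ) (c : ℝ) {r : ℝ} (hr : σ ≤ 2 * r) :
    σ * exp (-(max (|c| - r) 0 + σ) ^ 2 / (2 * σ ^ 2)) ≤
      ∫ u in c - r..c + r, exp (-u ^ 2 / (2 * σ ^ 2)) := by
  set τ := max (|c| - r) 0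
  -- a window of length `σ` inside `[c - r, c + r]` on which `|u| ≤ τ + σ`
  set a := max (c - r) (min 0 (c + r - σ))
  have hca : c - r ≤ a := le_max_left _ _
  have hac : a + σ ≤ c + r := by
    have : a ≤ c + r - σ := max_le (by linarith) (min_le_right _ _)
    linarith
  have hwindow : ∀ u ∈ Icc a (a + σ), |u| ≤ τ + σ := by
    intro u hu
    have hτ₁ : |c| - r ≤ τ := le_max_left _ _
    have hτ₀ : 0 ≤ τ := le_max_right _ _
    have h₁ : a ≤ τ := max_le (by linarith [le_abs_self c]) (by simp [hτ₀])
    have h₂ : -(τ + σ) ≤ a := le_max_of_le_right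
      (le_min (by linarith) (by linarith [neg_abs_le c]))
    exact abs_le.mpr ⟨by linarith [hu.1], by linarith [hu.2]⟩
  have hcont : Continuous fun u : ℝ => exp (-u ^ 2 / (2 * σ ^ 2)) := by fun_prop
  calc σ * exp (-(τ + σ) ^ 2 / (2 * σ ^ 2))
      = ∫ _ in a..a + σ, exp (-(τ + σ) ^ 2 / (2 * σ ^ 2)) := by simp
    _ ≤ ∫ u in a..a + σ, exp (-u ^ 2 / (2 * σ ^ 2)) := by
        refine integral_mono_on (by linarith) intervalIntegrable_const
          (hcont.intervalIntegrable _ _) fun u hu => ?_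
        have : u ^ 2 ≤ (τ + σ) ^ 2 := sq_le_sq' (abs_le.mp (hwindow u hu)).1
          (abs_le.mp (hwindow u hu)).2
        rw [exp_le_exp]
        exact div_le_div_of_nonneg_right (neg_le_neg this) (by positivity)
    _ ≤ ∫ u in c - r..c + r, exp (-u ^ 2 / (2 * σ ^ 2)) :=
        integral_mono_interval hca (by linarith) hac
          (Filter.Eventually.of_forall fun _ => exp_nonneg _) (hcont.intervalIntegrable _ _)

lemma integral_abs_mul_exp_le (hσ : 0 < σ) (c : ℝ) {r : ℝ} (hr : 0 ≤ r) :
    ∫ u in c - r..c + r, |u| * exp (-u ^ 2 / (2 * σ ^ 2)) ≤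
      (max (|c| - r) 0 + 4 * σ) * ∫ u in c - r..c + r, exp (-u ^ 2 / (2 * σ ^ 2)) := by
  set τ := max (|c| - r) 0
  set G := ∫ u in c - r..c + r, exp (-u ^ 2 / (2 * σ ^ 2))
  have hτ₁ : |c| - r ≤ τ := le_max_left _ _
  have hτ₀ : 0 ≤ τ := le_max_right _ _
  have hlt : c - r ≤ c + r := by linarith
  rcases le_total (2 * r) σ with hshort | hlong
  · calc ∫ u in c - r..c + r, |u| * exp (-u ^ 2 / (2 * σ ^ 2))
        ≤ ∫ u in c - r..c + r, (τ + 4 * σ) * exp (-u ^ 2 / (2 * σ ^ 2)) := by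
          refine integral_mono_on hlt ((by fun_prop : Continuous _).intervalIntegrable _ _)
            ((by fun_prop : Continuous _).intervalIntegrable _ _) fun u hu => ?_
          have : |u| ≤ τ + 4 * σ := abs_le.mpr
            ⟨by linarith [hu.1, neg_abs_le c], by linarith [hu.2, le_abs_self c]⟩
          exact mul_le_mul_of_nonneg_right this (exp_pos _).le
      _ = (τ + 4 * σ) * G := intervalIntegral.integral_const_mul _ _
  · -- cut at `s = τ + 3σ`: the Gaussian tail beyond `s` is negligible against `G`
    set s := τ + 3 * σ
    have htail := integral_max_abs_sub_mul_exp_le hσ.ne' (by positivity : 0 ≤ s) hlt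
    have hwindow := mul_exp_le_integral_exp hσ c hlong
    have hdecay : 2 * exp (-s ^ 2 / (2 * σ ^ 2)) ≤ exp (-(τ + σ) ^ 2 / (2 * σ ^ 2)) := by
      have h4 : -s ^ 2 / (2 * σ ^ 2) + 4 ≤ -(τ + σ) ^ 2 / (2 * σ ^ 2) := by
        rw [div_add' _ _ _ (by positivity), div_le_div_iff_of_pos_right (by positivity)]
        nlinarith [mul_nonneg hτ₀ hσ.le]
      calc 2 * exp (-s ^ 2 / (2 * σ ^ 2)) ≤ exp 4 * exp (-s ^ 2 / (2 * σ ^ 2)) := by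
            gcongr; linarith [add_one_le_exp (4 : ℝ)]
        _ = exp (-s ^ 2 / (2 * σ ^ 2) + 4) := by rw [← exp_add, add_comm]
        _ ≤ _ := exp_le_exp.mpr h4
    calc ∫ u in c - r..c + r, |u| * exp (-u ^ 2 / (2 * σ ^ 2))
        ≤ ∫ u in c - r..c + r, (s * exp (-u ^ 2 / (2 * σ ^ 2)) +
            max (|u| - s) 0 * exp (-u ^ 2 / (2 * σ ^ 2))) := by
          refine integral_mono_on hlt ((by fun_prop : Continuous _).intervalIntegrable _ _)
            ((by fun_prop : Continuous _).intervalIntegrable _ _) fun u _ => ?_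
          rw [← add_mul]
          exact mul_le_mul_of_nonneg_right (by linarith [le_max_left (|u| - s) 0]) (exp_pos _).le
      _ = s * G + ∫ u in c - r..c + r, max (|u| - s) 0 * exp (-u ^ 2 / (2 * σ ^ 2)) := by
          rw [integral_add ((by fun_prop : Continuous _).intervalIntegrable _ _)
            ((by fun_prop : Continuous _).intervalIntegrable _ _),
            intervalIntegral.integral_const_mul]
      _ ≤ s * G + σ * G := by
          have : 2 * σ ^ 2 * exp (-s ^ 2 / (2 * σ ^ 2)) ≤ σ * G := calc
            2 * σ ^ 2 * exp (-s ^ 2 / (2 * σ ^ 2))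
                ≤ σ * (σ * exp (-(τ + σ) ^ 2 / (2 * σ ^ 2))) := by nlinarith [sq_nonneg σ]
            _ ≤ σ * G := mul_le_mul_of_nonneg_left hwindow hσ.le
          linarith
      _ = (τ + 4 * σ) * G := by ring

lemma integral_abs_sub_mul_exp_le (hσ : 0 < σ) (c : ℝ) {m : ℝ} (hm : 0 < m) :
    ∫ v in (-1)..1, |c - m * v| * exp (-(c - m * v) ^ 2 / (2 * σ ^ 2)) ≤
      (max (|c| - m) 0 + 4 * σ) * ∫ v in (-1)..1, exp (-(c - m * v) ^ 2 / (2 * σ ^ 2)) := by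
  rw [integral_comp_sub_mul (fun u => |u| * exp (-u ^ 2 / (2 * σ ^ 2))) hm.ne',
    integral_comp_sub_mul (fun u => exp (-u ^ 2 / (2 * σ ^ 2))) hm.ne', smul_eq_mul, smul_eq_mul,
    mul_one, mul_neg_one, sub_neg_eq_add, mul_left_comm]
  exact mul_le_mul_of_nonneg_left (integral_abs_mul_exp_le hσ c hm.le) (inv_pos.mpr hm).le

lemma abs_mul_exp_neg_div_le {u S : ℝ} (hσ : 0 < σ) (hu : u ^ 2 ≤ S) :
    |u| * exp (-S / (2 * σ ^ 2)) ≤ σ := by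
  have hsq : (|u| / σ) ^ 2 / 2 ≤ S / (2 * σ ^ 2) := calc
    (|u| / σ) ^ 2 / 2 = u ^ 2 / (2 * σ ^ 2) := by rw [div_pow, sq_abs]; ring
    _ ≤ S / (2 * σ ^ 2) := by gcongr
  have hS : |u| / σ ≤ exp (S / (2 * σ ^ 2)) := by
    nlinarith [add_one_le_exp (S / (2 * σ ^ 2)), sq_nonneg (|u| / σ - 1)]
  rw [neg_div, exp_neg, ← div_eq_mul_inv, div_le_iff₀ (exp_pos _)]
  rwa [div_le_iff₀' hσ] at hS

end GaussianInterval

section ProductIntegral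

variable {ι : Type*} [Fintype ι] [DecidableEq ι]

lemma mul_prod_eq_prod_update (f : ι → ℝ → ℝ) (w : ℝ → ℝ) (i : ι) (y : ι → ℝ) :
    w (y i) * ∏ j, f j (y j) = ∏ j, Function.update f i (fun v => w v * f i v) j (y j) := by
  rw [Fintype.prod_eq_mul_prod_compl i, Fintype.prod_eq_mul_prod_compl i, ← mul_assoc]
  congr 1
  · simp
  · refine Finset.prod_congr rfl fun j hj => ?_
    rw [Function.update_of_ne (by simpa using hj)]

lemma integrable_mul_prod {f : ι → ℝ → ℝ} {w : ℝ → ℝ} {i : ι} (hf : ∀ j, Integrable (f j))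
    (hwf : Integrable fun v => w v * f i v) :
    Integrable fun y : ι → ℝ => w (y i) * ∏ j, f j (y j) := by
  simp_rw [mul_prod_eq_prod_update]
  refine Integrable.fintype_prod fun j => ?_
  rcases eq_or_ne j i with rfl | hj
  · simpa using hwf
  · simpa [hj] using hf j

lemma integral_mul_prod_le {f : ι → ℝ → ℝ} {w : ℝ → ℝ} {i : ι} {K : ℝ}
    (hf : ∀ j, 0 ≤ ∫ v, f j v) (hK : ∫ v, w v * f i v ≤ K * ∫ v, f i v) :
    ∫ y : ι → ℝ, w (y i) * ∏ j, f j (y j) ≤ K * ∏ j, ∫ v, f j v := by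
  simp_rw [mul_prod_eq_prod_update]
  rw [integral_fintype_prod_volume_eq_prod, Fintype.prod_eq_mul_prod_compl i,
    Fintype.prod_eq_mul_prod_compl i, ← mul_assoc]
  have hrest : ∏ j ∈ {i}ᶜ, ∫ v, Function.update f i (fun v => w v * f i v) j v =
      ∏ j ∈ {i}ᶜ, ∫ v, f j v :=
    Finset.prod_congr rfl fun j hj => by rw [Function.update_of_ne (by simpa using hj)]
  rw [Function.update_self, hrest]
  exact mul_le_mul_of_nonneg_right hK (Finset.prod_nonneg fun j _ => hf j)

end ProductIntegral

noncomputable section GaussianConvolution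

variable {ι : Type*} [Fintype ι]

def gaussKernel (m σ : ℝ) (z y : ι → ℝ) : ℝ :=
  exp (-(∑ j, (z j - m * y j) ^ 2) / (2 * σ ^ 2))

def gaussConv (ρ : (ι → ℝ) → ℝ) (m σ : ℝ) (z : ι → ℝ) : ℝ :=
  ∫ y, ρ y * gaussKernel m σ z y

def gaussKernelLogDeriv (m σ : ℝ) (z y : ι → ℝ) : (ι → ℝ) →L[ℝ] ℝ :=
  ∑ j, ((m * y j - z j) / σ ^ 2) • ContinuousLinearMap.proj j

variable {m σ : ℝ}

lemma gaussKernel_pos (m σ : ℝ) (z y : ι → ℝ) : 0 < gaussKernel m σ z y := exp_pos _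

lemma gaussKernel_le_one (m σ : ℝ) (z y : ι → ℝ) : gaussKernel m σ z y ≤ 1 :=
  exp_le_one_iff.mpr (div_nonpos_of_nonpos_of_nonneg
    (neg_nonpos.mpr (Finset.sum_nonneg fun _ _ => sq_nonneg _)) (by positivity))

lemma continuous_gaussKernel_right (m σ : ℝ) (z : ι → ℝ) :
    Continuous (gaussKernel m σ z) := by
  unfold gaussKernel; fun_prop

lemma continuous_gaussKernelLogDeriv_right (m σ : ℝ) (z : ι → ℝ) :
    Continuous (gaussKernelLogDeriv m σ z) := by
  unfold gaussKernelLogDeriv; fun_prop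

lemma gaussKernelLogDeriv_apply_single [DecidableEq ι] (m σ : ℝ) (z y : ι → ℝ) (i : ι) :
    gaussKernelLogDeriv m σ z y (Pi.single i 1) = (m * y i - z i) / σ ^ 2 := by
  simp [gaussKernelLogDeriv, Pi.single_apply]

lemma hasFDerivAt_gaussKernel (m σ : ℝ) (y z : ι → ℝ) :
    HasFDerivAt (fun z => gaussKernel m σ z y)
      (gaussKernel m σ z y • gaussKernelLogDeriv m σ z y) z := by
  have hsq (j : ι) : HasFDerivAt (fun z : ι → ℝ => (z j - m * y j) ^ 2)
      ((2 * (z j - m * y j)) • ContinuousLinearMap.proj (R := ℝ) (φ := fun _ : ι => ℝ) j) z := by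
    simpa using
      ((hasFDerivAt_apply (𝕜 := ℝ) (F' := fun _ : ι => ℝ) j z).sub_const (m * y j)).pow 2
  have h := ((HasFDerivAt.fun_sum (u := Finset.univ) fun j _ => hsq j).fun_neg.mul_const
    (2 * σ ^ 2)⁻¹).exp
  simp only [← div_eq_mul_inv] at h
  refine h.congr_fderiv ?_
  ext v
  simp only [gaussKernel, gaussKernelLogDeriv, smul_apply, neg_apply,
    sum_apply, ContinuousLinearMap.proj_apply, smul_eq_mul, Finset.mul_sum,
    ← Finset.sum_neg_distrib]
  exact Finset.sum_congr rfl fun j _ => by ring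

lemma norm_gaussKernel_smul_logDeriv_le (hσ : 0 < σ) (z y : ι → ℝ) :
    ‖gaussKernel m σ z y • gaussKernelLogDeriv m σ z y‖ ≤ Fintype.card ι / σ := by
  have hcoord (j : ι) : gaussKernel m σ z y * |(m * y j - z j) / σ ^ 2| ≤ σ⁻¹ := by
    have hsq : (z j - m * y j) ^ 2 ≤ ∑ k, (z k - m * y k) ^ 2 :=
      Finset.single_le_sum (f := fun k => (z k - m * y k) ^ 2) (fun _ _ => sq_nonneg _)
        (Finset.mem_univ j)
    have := abs_mul_exp_neg_div_le hσ hsq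
    rw [abs_div, abs_sub_comm, abs_of_pos (by positivity : 0 < σ ^ 2), mul_div_assoc',
      div_le_iff₀ (by positivity), mul_comm]
    calc |z j - m * y j| * gaussKernel m σ z y ≤ σ := this
      _ = σ⁻¹ * σ ^ 2 := by field_simp
  refine ContinuousLinearMap.opNorm_le_bound _ (by positivity) fun v => ?_
  simp only [gaussKernelLogDeriv, smul_apply, sum_apply, ContinuousLinearMap.proj_apply,
    smul_eq_mul, Finset.mul_sum, Real.norm_eq_abs]
  calc |∑ j, gaussKernel m σ z y * ((m * y j - z j) / σ ^ 2 * v j)|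
      ≤ ∑ j, gaussKernel m σ z y * |(m * y j - z j) / σ ^ 2| * |v j| := by
        refine (Finset.abs_sum_le_sum_abs _ _).trans (Finset.sum_le_sum fun j _ => ?_)
        rw [abs_mul, abs_mul, abs_of_pos (gaussKernel_pos m σ z y), mul_assoc]
    _ ≤ ∑ _j : ι, σ⁻¹ * ‖v‖ := Finset.sum_le_sum fun j _ =>
        mul_le_mul (hcoord j) (by simpa using norm_le_pi_norm v j) (abs_nonneg _) (by positivity)
    _ = Fintype.card ι / σ * ‖v‖ := by simp [div_eq_mul_inv, mul_assoc]

variable {ρ : (ι → ℝ) → ℝ}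

lemma integrable_mul_gaussKernel (hρ : Integrable ρ) (m σ : ℝ) (z : ι → ℝ) :
    Integrable fun y => ρ y * gaussKernel m σ z y :=
  hρ.mul_of_top_left <| memLp_top_of_bound
    (continuous_gaussKernel_right m σ z).aestronglyMeasurable 1
    (Filter.Eventually.of_forall fun y => by
      rw [Real.norm_eq_abs, abs_of_pos (gaussKernel_pos m σ z y)]
      exact gaussKernel_le_one m σ z y)

lemma norm_mul_gaussKernel_smul_logDeriv_le (hσ : 0 < σ) (y z : ι → ℝ) :
    ‖(ρ y * gaussKernel m σ z y) • gaussKernelLogDeriv m σ z y‖ ≤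
      ‖ρ y‖ * (Fintype.card ι / σ) := by
  rw [mul_smul, norm_smul]
  exact mul_le_mul_of_nonneg_left (norm_gaussKernel_smul_logDeriv_le hσ z y) (norm_nonneg _)

lemma integrable_mul_gaussKernel_smul_logDeriv (hρ : Integrable ρ) (m : ℝ) (hσ : 0 < σ)
    (z : ι → ℝ) :
    Integrable fun y => (ρ y * gaussKernel m σ z y) • gaussKernelLogDeriv m σ z y :=
  (hρ.norm.mul_const _).mono' ((integrable_mul_gaussKernel hρ m σ z).aestronglyMeasurable.smul
      (continuous_gaussKernelLogDeriv_right m σ z).aestronglyMeasurable)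
    (Filter.Eventually.of_forall fun y => norm_mul_gaussKernel_smul_logDeriv_le hσ y z)

lemma hasFDerivAt_gaussConv (hρ : Integrable ρ) (m : ℝ) (hσ : 0 < σ) (x : ι → ℝ) :
    HasFDerivAt (gaussConv ρ m σ)
      (∫ y, (ρ y * gaussKernel m σ x y) • gaussKernelLogDeriv m σ x y) x := by
  have hderiv (y z : ι → ℝ) : HasFDerivAt (fun z => ρ y * gaussKernel m σ z y)
      ((ρ y * gaussKernel m σ z y) • gaussKernelLogDeriv m σ z y) z := by
    simpa [smul_smul] using (hasFDerivAt_gaussKernel m σ y z).const_mul (ρ y)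
  exact hasFDerivAt_integral_of_dominated_of_fderiv_le Filter.univ_mem
    (Filter.Eventually.of_forall fun z =>
      (integrable_mul_gaussKernel hρ m σ z).aestronglyMeasurable)
    (integrable_mul_gaussKernel hρ m σ x)
    (integrable_mul_gaussKernel_smul_logDeriv hρ m hσ x).aestronglyMeasurable
    (Filter.Eventually.of_forall fun y z _ =>
      norm_mul_gaussKernel_smul_logDeriv_le (ρ := ρ) (m := m) hσ y z)
    (hρ.norm.mul_const _) (Filter.Eventually.of_forall fun y z _ => hderiv y z)

lemma fderiv_log_const_mul_gaussConv_apply_single [DecidableEq ι] (hρ : Integrable ρ) (m : ℝ)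
    (hσ : 0 < σ) {c : ℝ} (hc : c ≠ 0) {x : ι → ℝ} (hx : gaussConv ρ m σ x ≠ 0) (i : ι) :
    fderiv ℝ (fun z => log (c * gaussConv ρ m σ z)) x (Pi.single i 1) =
      (∫ y, ρ y * gaussKernel m σ x y * (m * y i - x i)) / (σ ^ 2 * gaussConv ρ m σ x) := by
  have hF := (hasFDerivAt_gaussConv hρ m hσ x).const_mul c |>.log (mul_ne_zero hc hx)
  rw [hF.fderiv, smul_apply, smul_apply, ContinuousLinearMap.integral_apply
    (integrable_mul_gaussKernel_smul_logDeriv hρ m hσ x)]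
  simp only [smul_apply, gaussKernelLogDeriv_apply_single, smul_eq_mul, mul_div_assoc',
    MeasureTheory.integral_div]
  field_simp

end GaussianConvolution

section CubeDensity

variable {ι : Type*} [Fintype ι] {C m σ : ℝ} {ρ : (ι → ℝ) → ℝ}

lemma integral_indicator_Icc {a b : ℝ} (hab : a ≤ b) (f : ℝ → ℝ) :
    ∫ v, (Icc a b).indicator f v = ∫ v in a..b, f v := by
  rw [integral_indicator measurableSet_Icc, integral_Icc_eq_integral_Ioc,
    intervalIntegral.integral_of_le hab]

lemma integrable_of_abs_le_on_cube (hmeas : Measurable ρ)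
    (hsupp : ∀ y : ι → ℝ, ¬ (∀ j, |y j| ≤ 1) → ρ y = 0)
    (hbd : ∀ y : ι → ℝ, (∀ j, |y j| ≤ 1) → |ρ y| ≤ C) : Integrable ρ := by
  have hcube : {y : ι → ℝ | ∀ j, |y j| ≤ 1} = univ.pi fun _ => Icc (-1) 1 := by
    ext y; simp only [mem_ofPred_eq, mem_pi, mem_univ, true_implies, mem_Icc, abs_le]
  have hcube_meas : MeasurableSet {y : ι → ℝ | ∀ j, |y j| ≤ 1} := by
    rw [hcube]; exact .univ_pi fun _ => measurableSet_Icc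
  have hρ : ρ = {y : ι → ℝ | ∀ j, |y j| ≤ 1}.indicator ρ := by
    ext y; by_cases hy : ∀ j, |y j| ≤ 1 <;> simp [hy, hsupp]
  rw [hρ, integrable_indicator_iff hcube_meas]
  refine Measure.integrableOn_of_bounded (M := C) ?_ hmeas.aestronglyMeasurable
    ((ae_restrict_mem hcube_meas).mono fun y hy => hbd y hy)
  rw [hcube]
  exact (isCompact_univ_pi fun _ => isCompact_Icc).measure_lt_top.ne

noncomputable def cubeGaussFactor (m σ c : ℝ) : ℝ → ℝ :=
  (Icc (-1) 1).indicator fun v => exp (-(c - m * v) ^ 2 / (2 * σ ^ 2))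

lemma integrable_cubeGaussFactor (m σ c : ℝ) : Integrable (cubeGaussFactor m σ c) :=
  (integrable_indicator_iff measurableSet_Icc).mpr
    ((by fun_prop : Continuous fun v : ℝ => exp (-(c - m * v) ^ 2 / (2 * σ ^ 2))).integrableOn_Icc)

lemma integral_cubeGaussFactor (m σ c : ℝ) :
    ∫ v, cubeGaussFactor m σ c v = ∫ v in (-1)..1, exp (-(c - m * v) ^ 2 / (2 * σ ^ 2)) :=
  integral_indicator_Icc (by norm_num) _

lemma integral_cubeGaussFactor_pos (m σ c : ℝ) : 0 < ∫ v, cubeGaussFactor m σ c v := by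
  rw [integral_cubeGaussFactor]
  exact intervalIntegral.intervalIntegral_pos_of_pos_on
    ((by fun_prop : Continuous fun v : ℝ => exp (-(c - m * v) ^ 2 / (2 * σ ^ 2))).intervalIntegrable
      _ _) (fun _ _ => exp_pos _) (by norm_num)

lemma abs_sub_mul_cubeGaussFactor (m σ c : ℝ) :
    (fun v => |c - m * v| * cubeGaussFactor m σ c v) =
      (Icc (-1) 1).indicator fun v => |c - m * v| * exp (-(c - m * v) ^ 2 / (2 * σ ^ 2)) :=
  funext fun _ => (indicator_mul_right (Icc (-1) 1) (fun v => |c - m * v|) _).symm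

lemma prod_cubeGaussFactor_of_mem {y : ι → ℝ} (hy : ∀ j, |y j| ≤ 1) (x : ι → ℝ) :
    ∏ j, cubeGaussFactor m σ (x j) (y j) = gaussKernel m σ x y := by
  rw [gaussKernel, neg_div, Finset.sum_div, ← Finset.sum_neg_distrib, exp_sum]
  refine Finset.prod_congr rfl fun j _ => ?_
  rw [cubeGaussFactor, indicator_of_mem (mem_Icc.mpr (abs_le.mp (hy j))), neg_div]

lemma prod_cubeGaussFactor_of_not_mem {y : ι → ℝ} (hy : ¬ ∀ j, |y j| ≤ 1) (x : ι → ℝ) :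
    ∏ j, cubeGaussFactor m σ (x j) (y j) = 0 := by
  obtain ⟨j, hj⟩ := not_forall.mp hy
  exact Finset.prod_eq_zero (Finset.mem_univ j)
    (indicator_of_notMem (fun h => hj (abs_le.mpr (mem_Icc.mp h))) _)

variable (hsupp : ∀ y : ι → ℝ, ¬ (∀ j, |y j| ≤ 1) → ρ y = 0)
  (hbd : ∀ y : ι → ℝ, (∀ j, |y j| ≤ 1) → C⁻¹ ≤ ρ y ∧ ρ y ≤ C)
include hsupp hbd

lemma inv_mul_prod_cubeGaussFactor_le (x y : ι → ℝ) :
    C⁻¹ * ∏ j, cubeGaussFactor m σ (x j) (y j) ≤ ρ y * gaussKernel m σ x y := by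
  by_cases hy : ∀ j, |y j| ≤ 1
  · rw [prod_cubeGaussFactor_of_mem hy]
    exact mul_le_mul_of_nonneg_right (hbd y hy).1 (gaussKernel_pos m σ x y).le
  · rw [prod_cubeGaussFactor_of_not_mem hy, hsupp y hy]
    simp

lemma abs_mul_gaussKernel_le (hC : 0 < C) (x y : ι → ℝ) :
    |ρ y * gaussKernel m σ x y| ≤ C * ∏ j, cubeGaussFactor m σ (x j) (y j) := by
  by_cases hy : ∀ j, |y j| ≤ 1
  · have hρ : 0 < ρ y := (inv_pos.mpr hC).trans_le (hbd y hy).1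
    rw [prod_cubeGaussFactor_of_mem hy, abs_of_pos (mul_pos hρ (gaussKernel_pos m σ x y))]
    exact mul_le_mul_of_nonneg_right (hbd y hy).2 (gaussKernel_pos m σ x y).le
  · rw [prod_cubeGaussFactor_of_not_mem hy, hsupp y hy]
    simp

lemma inv_mul_prod_integral_le_gaussConv (hρ : Integrable ρ) (x : ι → ℝ) :
    C⁻¹ * ∏ j, ∫ v, cubeGaussFactor m σ (x j) v ≤ gaussConv ρ m σ x := by
  rw [← integral_fintype_prod_volume_eq_prod, ← integral_const_mul]
  exact integral_mono
    ((Integrable.fintype_prod fun j => integrable_cubeGaussFactor m σ (x j)).const_mul _)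
    (integrable_mul_gaussKernel hρ m σ x) (inv_mul_prod_cubeGaussFactor_le hsupp hbd x)

lemma abs_integral_mul_gaussKernel_mul_le [DecidableEq ι] (hC : 0 < C) (hm : 0 < m)
    (hσ : 0 < σ) (x : ι → ℝ) (i : ι) :
    |∫ y, ρ y * gaussKernel m σ x y * (m * y i - x i)| ≤
      C * ((max (|x i| - m) 0 + 4 * σ) * ∏ j, ∫ v, cubeGaussFactor m σ (x j) v) := by
  have hwf : Integrable fun v => |x i - m * v| * cubeGaussFactor m σ (x i) v := by
    rw [abs_sub_mul_cubeGaussFactor]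
    exact (integrable_indicator_iff measurableSet_Icc).mpr
      (Continuous.integrableOn_Icc (by fun_prop))
  have hK : ∫ v, |x i - m * v| * cubeGaussFactor m σ (x i) v ≤
      (max (|x i| - m) 0 + 4 * σ) * ∫ v, cubeGaussFactor m σ (x i) v := by
    rw [abs_sub_mul_cubeGaussFactor, integral_indicator_Icc (by norm_num),
      integral_cubeGaussFactor]
    exact integral_abs_sub_mul_exp_le hσ (x i) hm
  calc |∫ y, ρ y * gaussKernel m σ x y * (m * y i - x i)|
      ≤ ∫ y, |ρ y * gaussKernel m σ x y * (m * y i - x i)| := abs_integral_le_integral_abs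
    _ ≤ ∫ y : ι → ℝ, C * (|x i - m * y i| * ∏ j, cubeGaussFactor m σ (x j) (y j)) := by
        refine integral_mono_of_nonneg (Filter.Eventually.of_forall fun _ => abs_nonneg _)
          ((integrable_mul_prod (fun j => integrable_cubeGaussFactor m σ (x j)) hwf).const_mul _)
          (Filter.Eventually.of_forall fun y => ?_)
        dsimp only
        rw [abs_mul, abs_sub_comm, mul_left_comm, mul_comm]
        exact mul_le_mul_of_nonneg_left (abs_mul_gaussKernel_le hsupp hbd hC x y) (abs_nonneg _)
    _ = C * ∫ y : ι → ℝ, |x i - m * y i| * ∏ j, cubeGaussFactor m σ (x j) (y j) :=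
        integral_const_mul _ _
    _ ≤ C * ((max (|x i| - m) 0 + 4 * σ) * ∏ j, ∫ v, cubeGaussFactor m σ (x j) v) :=
        mul_le_mul_of_nonneg_left
          (integral_mul_prod_le (fun j => (integral_cubeGaussFactor_pos m σ (x j)).le) hK) hC.le

lemma abs_fderiv_log_const_mul_gaussConv_apply_single_le [DecidableEq ι] (hmeas : Measurable ρ)
    (hC : 0 < C) (hm : 0 < m) (hσ : 0 < σ) {c : ℝ} (hc : c ≠ 0) (x : ι → ℝ) (i : ι) :
    |fderiv ℝ (fun z => log (c * gaussConv ρ m σ z)) x (Pi.single i 1)| ≤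
      C ^ 2 * (max (|x i| - m) 0 + 4 * σ) / σ ^ 2 := by
  have hρ : Integrable ρ := integrable_of_abs_le_on_cube hmeas hsupp fun y hy =>
    abs_le.mpr ⟨by linarith [(inv_pos.mpr hC).trans_le (hbd y hy).1], (hbd y hy).2⟩
  set P := ∏ j, ∫ v, cubeGaussFactor m σ (x j) v
  have hP : 0 < P := Finset.prod_pos fun j _ => integral_cubeGaussFactor_pos m σ (x j)
  have hq := inv_mul_prod_integral_le_gaussConv hsupp hbd (m := m) (σ := σ) hρ x
  have hq0 : 0 < gaussConv ρ m σ x := lt_of_lt_of_le (by positivity) hq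
  rw [fderiv_log_const_mul_gaussConv_apply_single hρ m hσ hc hq0.ne', abs_div,
    abs_of_pos (mul_pos (by positivity) hq0), div_le_div_iff₀ (by positivity) (by positivity)]
  calc |∫ y, ρ y * gaussKernel m σ x y * (m * y i - x i)| * σ ^ 2
      ≤ C * ((max (|x i| - m) 0 + 4 * σ) * P) * σ ^ 2 := by
        gcongr; exact abs_integral_mul_gaussKernel_mul_le hsupp hbd hC hm hσ x i
    _ = C ^ 2 * (max (|x i| - m) 0 + 4 * σ) * (σ ^ 2 * (C⁻¹ * P)) := by field_simp
    _ ≤ C ^ 2 * (max (|x i| - m) 0 + 4 * σ) * (σ ^ 2 * gaussConv ρ m σ x) := by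
        have : 0 ≤ max (|x i| - m) 0 + 4 * σ := by positivity
        gcongr

end CubeDensity

lemma exp_neg_integral_lt_one {β : ℝ → ℝ} {t : ℝ} (ht : 0 < t) (hc : ContinuousOn β (Ici 0))
    (hpos : ∀ s, 0 ≤ s → 0 < β s) : exp (-∫ s in (0 : ℝ)..t, β s) < 1 := by
  refine exp_lt_one_iff.mpr (neg_neg_of_pos (intervalIntegral.intervalIntegral_pos_of_pos_on ?_
    (fun s hs => hpos s hs.1.le) ht))
  exact (hc.mono (by rw [uIcc_of_le ht.le]; exact Icc_subset_Ici_self)).intervalIntegrable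

lemma sqrt_log_inv_add_four_le {ε : ℝ} (hε : 0 < ε) (hε2 : ε < 1 / 2) :
    √(log ε⁻¹) + 4 ≤ 6 * √(log ε⁻¹) := by
  have hlog : log 2 ≤ log ε⁻¹ :=
    log_le_log (by norm_num) (by rw [le_inv_comm₀ (by norm_num) hε]; linarith)
  have : 0.8 ≤ √(log ε⁻¹) :=
    (le_sqrt (by norm_num) (by linarith [log_pos one_lt_two])).mpr
      (by linarith [log_two_gt_d9])
  linarith

lemma sqrt_sum_sq_le_of_abs_le {ι : Type*} [Fintype ι] {s : ι → ℝ} {b : ℝ} (hb : 0 ≤ b)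
    (hs : ∀ i, |s i| ≤ b) : √(∑ i, s i ^ 2) ≤ √(Fintype.card ι) * b := by
  have hsum : ∑ i, s i ^ 2 ≤ Fintype.card ι * b ^ 2 := by
    simpa using Finset.sum_le_card_nsmul Finset.univ _ _ fun i _ =>
      sq_le_sq' (abs_le.mp (hs i)).1 (abs_le.mp (hs i)).2
  calc √(∑ i, s i ^ 2) ≤ √(Fintype.card ι * b ^ 2) := sqrt_le_sqrt hsum
    _ = √(Fintype.card ι) * b := by rw [sqrt_mul (Nat.cast_nonneg _), sqrt_sq hb]

theorem statement6_general
    (d : ℕ) (hd : 1 ≤ d)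
    (βlo βhi : ℝ) (hβlo : 0 < βlo)
    (β : ℝ → ℝ) (hβc : ContinuousOn β (Set.Ici 0))
    (hβb : ∀ t : ℝ, 0 ≤ t → βlo ≤ β t ∧ β t ≤ βhi)
    (m σ : ℝ → ℝ)
    (hm : ∀ t : ℝ, m t = Real.exp (-(∫ s in (0:ℝ)..t, β s)))
    (hσ : ∀ t : ℝ, σ t = Real.sqrt (1 - (m t) ^ 2))
    (Cf : ℝ) (hCf : 1 ≤ Cf)
    (p0 : (Fin d → ℝ) → ℝ) (hp0meas : Measurable p0)
    (hp0supp : ∀ x : Fin d → ℝ, ¬ (∀ i, |x i| ≤ 1) → p0 x = 0)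
    (hp0bd : ∀ x : Fin d → ℝ, (∀ i, |x i| ≤ 1) → Cf⁻¹ ≤ p0 x ∧ p0 x ≤ Cf)
    (p : ℝ → (Fin d → ℝ) → ℝ)
    (hp : ∀ t : ℝ, ∀ x : Fin d → ℝ, p t x =
      ∫ y : Fin d → ℝ, p0 y * ((2 * Real.pi * (σ t) ^ 2) ^ (-(d : ℝ) / 2) *
        Real.exp (-(∑ i, (x i - m t * y i) ^ 2) / (2 * (σ t) ^ 2))))
    (score : ℝ → (Fin d → ℝ) → (Fin d → ℝ))
    (hscore : ∀ t : ℝ, ∀ x : Fin d → ℝ, ∀ i : Fin d,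
      score t x i = fderiv ℝ (fun z => Real.log (p t z)) x (Pi.single i 1)) :
    ∃ C₁ C₂ : ℝ, 0 < C₁ ∧ 0 < C₂ ∧ ∀ ε : ℝ, 0 < ε → ε < 1/2 → ∀ t : ℝ, 0 < t →
      ∀ x : Fin d → ℝ, ‖x‖ ≤ m t + C₁ * σ t * Real.sqrt (Real.log ε⁻¹) →
        Real.sqrt (∑ i, (score t x i) ^ 2) ≤ (C₂ / σ t) * Real.sqrt (Real.log ε⁻¹) := by
  have hsqrt_d : 0 < √(d : ℝ) := sqrt_pos.mpr (by exact_mod_cast hd)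
  refine ⟨1, 6 * √d * Cf ^ 2, one_pos, by positivity, fun ε hε hε2 t ht x hx => ?_⟩
  set R := √(log ε⁻¹)
  have hm0 : 0 < m t := hm t ▸ exp_pos _
  have hm1 : m t < 1 :=
    hm t ▸ exp_neg_integral_lt_one ht hβc fun s hs => hβlo.trans_le (hβb s hs).1
  have hσ0 : 0 < σ t := by rw [hσ]; exact sqrt_pos.mpr (by nlinarith)
  set c := (2 * π * σ t ^ 2) ^ (-(d : ℝ) / 2)
  have hpt : p t = fun z => c * gaussConv p0 (m t) (σ t) z := funext fun z => by
    rw [hp, gaussConv, ← integral_const_mul]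
    exact integral_congr_ae (Filter.Eventually.of_forall fun y => mul_left_comm _ _ _)
  have hcoord (i : Fin d) : |score t x i| ≤ Cf ^ 2 * (R + 4) / σ t := by
    have hτ : max (|x i| - m t) 0 ≤ σ t * R := max_le
      (by linarith [(Real.norm_eq_abs (x i)).symm.trans_le (norm_le_pi_norm x i)])
      (by positivity)
    rw [hscore, hpt]
    refine (abs_fderiv_log_const_mul_gaussConv_apply_single_le hp0supp hp0bd hp0meas
      (by linarith) hm0 hσ0 (rpow_pos_of_pos (by positivity) _).ne' x i).trans ?_
    calc Cf ^ 2 * (max (|x i| - m t) 0 + 4 * σ t) / σ t ^ 2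
        ≤ Cf ^ 2 * (σ t * R + 4 * σ t) / σ t ^ 2 := by gcongr
      _ = Cf ^ 2 * (R + 4) / σ t := by field_simp
  calc √(∑ i, score t x i ^ 2) ≤ √(Fintype.card (Fin d)) * (Cf ^ 2 * (R + 4) / σ t) :=
        sqrt_sum_sq_le_of_abs_le (by positivity) hcoord
    _ ≤ √d * (Cf ^ 2 * (6 * R) / σ t) := by
        rw [Fintype.card_fin]; gcongr; exact sqrt_log_inv_add_four_le hε hε2
    _ = 6 * √d * Cf ^ 2 / σ t * R := by ring

/-- On the region `‖x‖∞ ≤ m_t + C₁ σ_t √(log ε⁻¹)` the score is bounded: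
`‖∇ log p_t(x)‖ ≤ (C₂/σ_t) √(log ε⁻¹)`, for constants `C₁, C₂` depending only on `d, C_f`. -/
theorem statement6
    (d : ℕ) (hd : 1 ≤ d)
    (βlo βhi : ℝ) (hβlo : 0 < βlo) (hβhi : βlo ≤ βhi)
    (β : ℝ → ℝ) (hβc : ContinuousOn β (Set.Ici 0))
    (hβb : ∀ t : ℝ, 0 ≤ t → βlo ≤ β t ∧ β t ≤ βhi)
    (m σ : ℝ → ℝ)
    (hm : ∀ t : ℝ, m t = Real.exp (-(∫ s in (0:ℝ)..t, β s)))
    (hσ : ∀ t : ℝ, σ t = Real.sqrt (1 - (m t) ^ 2))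
    (Cf : ℝ) (hCf : 1 ≤ Cf)
    (p0 : (Fin d → ℝ) → ℝ) (hp0meas : Measurable p0)
    (hp0nn : ∀ x, 0 ≤ p0 x) (hp0int : (∫ x, p0 x) = 1)
    (hp0supp : ∀ x : Fin d → ℝ, ¬ (∀ i, |x i| ≤ 1) → p0 x = 0)
    (hp0bd : ∀ x : Fin d → ℝ, (∀ i, |x i| ≤ 1) → Cf⁻¹ ≤ p0 x ∧ p0 x ≤ Cf)
    (p : ℝ → (Fin d → ℝ) → ℝ)
    (hp : ∀ t : ℝ, ∀ x : Fin d → ℝ, p t x =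
      ∫ y : Fin d → ℝ, p0 y * ((2 * Real.pi * (σ t) ^ 2) ^ (-(d : ℝ) / 2) *
        Real.exp (-(∑ i, (x i - m t * y i) ^ 2) / (2 * (σ t) ^ 2))))
    (score : ℝ → (Fin d → ℝ) → (Fin d → ℝ))
    (hscore : ∀ t : ℝ, ∀ x : Fin d → ℝ, ∀ i : Fin d,
      score t x i = fderiv ℝ (fun z => Real.log (p t z)) x (Pi.single i 1)) :
    ∃ C₁ C₂ : ℝ, 0 < C₁ ∧ 0 < C₂ ∧ ∀ ε : ℝ, 0 < ε → ε < 1/2 → ∀ t : ℝ, 0 < t →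
      ∀ x : Fin d → ℝ, ‖x‖ ≤ m t + C₁ * σ t * Real.sqrt (Real.log ε⁻¹) →
        Real.sqrt (∑ i, (score t x i) ^ 2) ≤ (C₂ / σ t) * Real.sqrt (Real.log ε⁻¹) :=
  statement6_general d hd βlo βhi hβlo β hβc hβb m σ hm hσ Cf hCf p0 hp0meas hp0supp hp0bd p hp
    score hscore
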